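/- Let N ≥ 2, R > 0, c₀ ≥ 0, and set α = (N + √(N² + 4R²c₀))/2. Then the function v(x) = (|x|^{−α} − R^{−α}) x₁ satisfies Δv(x) − c₀ v(x) ≥ 0 for all x with 0 < |x| < R and x₁ > 0. -/

import Mathlib

/-!
Writing `‖z‖ ^ p = (‖z‖ ^ 2) ^ (p / 2)` and differentiating twice along an orthonormal basis gives
`Δ ((‖z‖ ^ p - C) * ⟪a, z⟫) = p (p + N) ‖x‖ ^ (p - 2) ⟪a, x⟫` for every constant `C`. For `p = -α`
this is `(α² - Nα) ‖x‖ ^ (-α - 2) x₁`, so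
`Δv - c₀ v = (α² - Nα - c₀ ‖x‖²) ‖x‖ ^ (-α - 2) x₁ + c₀ R ^ (-α) x₁`, and the bracket is at least
`α² - Nα - c₀ R² = 0` since `α` is a root of this quadratic.
-/

/-- The Laplacian of `f : ℝ^N → ℝ` at `x`, as the sum of pure second derivatives. -/
noncomputable def lap {N : ℕ} (f : EuclideanSpace ℝ (Fin N) → ℝ)
    (x : EuclideanSpace ℝ (Fin N)) : ℝ :=
  ∑ i, iteratedFDeriv ℝ 2 f x ![EuclideanSpace.single i 1, EuclideanSpace.single i 1]

open InnerProductSpace Laplacian Filter Topology RealInnerProductSpace Module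

theorem iteratedFDeriv_two_apply_eq_fderiv_fderiv_apply {𝕜 E F : Type*}
    [NontriviallyNormedField 𝕜] [NormedAddCommGroup E] [NormedSpace 𝕜 E]
    [NormedAddCommGroup F] [NormedSpace 𝕜 F] {f : E → F} {x : E}
    (hf : DifferentiableAt 𝕜 (fderiv 𝕜 f) x) (u v : E) :
    iteratedFDeriv 𝕜 2 f x ![u, v] = fderiv 𝕜 (fun y => fderiv 𝕜 f y v) x u := by
  rw [iteratedFDeriv_two_apply, fderiv_clm_apply hf (differentiableAt_const v)]
  simp

section

variable {E : Type*} [NormedAddCommGroup E] [InnerProductSpace ℝ E] {g g' : ℝ → ℝ} (a : E)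

theorem hasFDerivAt_comp_norm_sq_mul_inner {x : E} {d : ℝ} (hg : HasDerivAt g d (‖x‖ ^ 2)) :
    HasFDerivAt (fun z => g (‖z‖ ^ 2) * ⟪a, z⟫)
      (g (‖x‖ ^ 2) • innerSL ℝ a + (2 * d * ⟪a, x⟫) • innerSL ℝ x) x := by
  have hgn := hg.comp_hasFDerivAt x (hasStrictFDerivAt_norm_sq x).hasFDerivAt
  refine (hgn.mul (innerSL ℝ a).hasFDerivAt).congr_fderiv ?_
  ext u
  simp only [Function.comp_apply, coe_innerSL_apply, add_apply, smul_apply, smul_eq_mul,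
    nsmul_eq_mul, Nat.cast_ofNat]
  ring

theorem iteratedFDeriv_two_comp_norm_sq_mul_inner {x : E} {g'' : ℝ}
    (hg : ∀ᶠ s in 𝓝 (‖x‖ ^ 2), HasDerivAt g (g' s) s) (hg' : HasDerivAt g' g'' (‖x‖ ^ 2))
    (u v : E) :
    iteratedFDeriv ℝ 2 (fun z => g (‖z‖ ^ 2) * ⟪a, z⟫) x ![u, v] =
      2 * g' (‖x‖ ^ 2) * (⟪x, u⟫ * ⟪a, v⟫ + ⟪a, u⟫ * ⟪x, v⟫ + ⟪a, x⟫ * ⟪u, v⟫)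
        + 4 * g'' * ⟪x, u⟫ * ⟪x, v⟫ * ⟪a, x⟫ := by
  have hnorm : ∀ y : E, HasFDerivAt (fun z : E => ‖z‖ ^ 2) (2 • innerSL ℝ y) y :=
    fun y => (hasStrictFDerivAt_norm_sq y).hasFDerivAt
  have hgy : ∀ᶠ y in 𝓝 x, HasDerivAt g (g' (‖y‖ ^ 2)) (‖y‖ ^ 2) :=
    (continuous_norm.pow 2).continuousAt.eventually hg
  have hfderiv : fderiv ℝ (fun z => g (‖z‖ ^ 2) * ⟪a, z⟫) =ᶠ[𝓝 x]
      fun y => g (‖y‖ ^ 2) • innerSL ℝ a + (2 * g' (‖y‖ ^ 2) * ⟪a, y⟫) • innerSL ℝ y := by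
    filter_upwards [hgy] with y hy using (hasFDerivAt_comp_norm_sq_mul_inner a hy).fderiv
  have hg₀ : HasFDerivAt (fun y : E => g (‖y‖ ^ 2)) _ x :=
    hgy.self_of_nhds.comp_hasFDerivAt x (hnorm x)
  have hg'₀ : HasFDerivAt (fun y : E => g' (‖y‖ ^ 2)) _ x := hg'.comp_hasFDerivAt x (hnorm x)
  have hdiff : DifferentiableAt ℝ (fderiv ℝ (fun z => g (‖z‖ ^ 2) * ⟪a, z⟫)) x := by
    refine DifferentiableAt.congr_of_eventuallyEq ?_ hfderiv
    exact (hg₀.differentiableAt.smul_const _).add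
      (((hg'₀.differentiableAt.const_mul 2).mul (innerSL ℝ a).differentiableAt).smul
        (innerSL ℝ (E := E)).differentiableAt)
  rw [iteratedFDeriv_two_apply_eq_fderiv_fderiv_apply hdiff]
  have hdir : (fun y => fderiv ℝ (fun z => g (‖z‖ ^ 2) * ⟪a, z⟫) y v) =ᶠ[𝓝 x]
      fun y => g (‖y‖ ^ 2) * ⟪a, v⟫ + 2 * g' (‖y‖ ^ 2) * ⟪a, y⟫ * ⟪y, v⟫ := by
    filter_upwards [hfderiv] with y hy
    simp [hy]
  rw [hdir.fderiv_eq]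
  have hlin : ∀ w : E, HasFDerivAt (fun y : E => ⟪w, y⟫) (innerSL ℝ w) x :=
    fun w => (innerSL ℝ w).hasFDerivAt
  have hinner_v : HasFDerivAt (fun y : E => ⟪y, v⟫) (innerSL ℝ v) x := by
    simpa only [real_inner_comm v] using hlin v
  have hφ : HasFDerivAt
      (fun y => g (‖y‖ ^ 2) * ⟪a, v⟫ + 2 * g' (‖y‖ ^ 2) * ⟪a, y⟫ * ⟪y, v⟫) _ x :=
    (hg₀.mul_const _).add (((hg'₀.const_mul 2).mul (hlin a)).mul hinner_v)
  rw [hφ.fderiv]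
  simp only [Pi.mul_apply, smul_add, add_apply, smul_apply, coe_innerSL_apply, nsmul_eq_mul,
    Nat.cast_ofNat, smul_eq_mul, real_inner_comm]
  ring

theorem laplacian_comp_norm_sq_mul_inner [FiniteDimensional ℝ E] {x : E} {g'' : ℝ}
    (hg : ∀ᶠ s in 𝓝 (‖x‖ ^ 2), HasDerivAt g (g' s) s) (hg' : HasDerivAt g' g'' (‖x‖ ^ 2)) :
    Δ (fun z => g (‖z‖ ^ 2) * ⟪a, z⟫) x =
      (4 * ‖x‖ ^ 2 * g'' + 2 * (finrank ℝ E + 2) * g' (‖x‖ ^ 2)) * ⟪a, x⟫ := by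
  rw [laplacian_eq_iteratedFDeriv_stdOrthonormalBasis]
  set b := stdOrthonormalBasis ℝ E
  have hxa : ∑ i, ⟪x, b i⟫ * ⟪b i, a⟫ = ⟪x, a⟫ := b.sum_inner_mul_inner x a
  have hxx : ∑ i, ⟪b i, x⟫ ^ 2 = ‖x‖ ^ 2 := b.sum_sq_inner_right x
  have hbb : ∀ i, ⟪b i, b i⟫ = 1 := fun i => by
    rw [real_inner_self_eq_norm_sq, b.orthonormal.1 i, one_pow]
  simp only [iteratedFDeriv_two_comp_norm_sq_mul_inner a hg hg', hbb]
  calc ∑ i, (2 * g' (‖x‖ ^ 2) * (⟪x, b i⟫ * ⟪a, b i⟫ + ⟪a, b i⟫ * ⟪x, b i⟫ + ⟪a, x⟫ * 1)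
        + 4 * g'' * ⟪x, b i⟫ * ⟪x, b i⟫ * ⟪a, x⟫)
      = ∑ i, (4 * g' (‖x‖ ^ 2) * (⟪x, b i⟫ * ⟪b i, a⟫) + 2 * g' (‖x‖ ^ 2) * ⟪a, x⟫
        + 4 * g'' * ⟪a, x⟫ * ⟪b i, x⟫ ^ 2) := by
        refine Finset.sum_congr rfl fun i _ => ?_
        rw [real_inner_comm a (b i), real_inner_comm x (b i)]
        ring
    _ = _ := by
        simp only [Finset.sum_add_distrib, ← Finset.mul_sum, hxa, hxx, Finset.sum_const,
          Finset.card_univ, Fintype.card_fin, nsmul_eq_mul]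
        rw [real_inner_comm x a]
        ring

theorem laplacian_norm_rpow_sub_mul_inner [FiniteDimensional ℝ E] (p C : ℝ) {x : E} (hx : x ≠ 0) :
    Δ (fun z => (‖z‖ ^ p - C) * ⟪a, z⟫) x = p * (p + finrank ℝ E) * ‖x‖ ^ (p - 2) * ⟪a, x⟫ := by
  have hr : 0 < ‖x‖ ^ 2 := by positivity
  have hpow : ∀ z : E, ∀ q : ℝ, ‖z‖ ^ q = (‖z‖ ^ 2) ^ (q / 2) := fun z q => by
    rw [← Real.rpow_natCast, ← Real.rpow_mul (norm_nonneg z)]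
    ring_nf
  have hg : ∀ᶠ s in 𝓝 (‖x‖ ^ 2), HasDerivAt (fun s : ℝ => s ^ (p / 2) - C)
      (p / 2 * s ^ (p / 2 - 1)) s := by
    filter_upwards [lt_mem_nhds hr] with s hs
    exact (Real.hasDerivAt_rpow_const (Or.inl hs.ne')).sub_const C
  have hg' : HasDerivAt (fun s : ℝ => p / 2 * s ^ (p / 2 - 1))
      (p / 2 * ((p / 2 - 1) * (‖x‖ ^ 2) ^ (p / 2 - 1 - 1))) (‖x‖ ^ 2) :=
    (Real.hasDerivAt_rpow_const (Or.inl hr.ne')).const_mul _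
  simp only [hpow _ p]
  rw [laplacian_comp_norm_sq_mul_inner a hg hg', hpow x (p - 2),
    show (p - 2) / 2 = p / 2 - 1 by ring, Real.rpow_sub_one hr.ne' (p / 2 - 1)]
  field_simp
  ring

end

theorem lap_eq_laplacian {N : ℕ} (f : EuclideanSpace ℝ (Fin N) → ℝ) : lap f = Δ f := by
  rw [laplacian_eq_iteratedFDeriv_orthonormalBasis f (EuclideanSpace.basisFun (Fin N) ℝ)]
  ext x
  simp only [EuclideanSpace.basisFun_apply, lap]

/-- With `α = (N + √(N² + 4R²c₀))/2`, the comparison function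
`v(x) = (|x|^(-α) - R^(-α)) x₁` satisfies `Δv - c₀ v ≥ 0` on `{0 < |x| < R, x₁ > 0}`. -/
theorem stmt3 {N : ℕ} (hN : 2 ≤ N) (R c₀ : ℝ) (hR : 0 < R) (hc₀ : 0 ≤ c₀) (α : ℝ)
    (hα : α = ((N : ℝ) + Real.sqrt ((N : ℝ) ^ 2 + 4 * R ^ 2 * c₀)) / 2)
    (v : EuclideanSpace ℝ (Fin N) → ℝ)
    (hv : ∀ x : EuclideanSpace ℝ (Fin N), v x = (‖x‖ ^ (-α) - R ^ (-α)) * x ⟨0, by omega⟩)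
    (x : EuclideanSpace ℝ (Fin N)) (hx₀ : 0 < ‖x‖) (hxR : ‖x‖ < R) (hx₁ : 0 < x ⟨0, by omega⟩) :
    0 ≤ lap v x - c₀ * v x := by
  set x₁ := x ⟨0, by omega⟩
  have hroot : α ^ 2 - N * α = R ^ 2 * c₀ := by
    have hs := Real.sq_sqrt (by positivity : 0 ≤ (N : ℝ) ^ 2 + 4 * R ^ 2 * c₀)
    rw [hα]
    linear_combination hs / 4
  have hv' : v = fun z => (‖z‖ ^ (-α) - R ^ (-α)) * ⟪EuclideanSpace.single ⟨0, by omega⟩ 1, z⟫ := by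
    ext z
    simp [hv, EuclideanSpace.inner_single_left]
  have hlap : lap v x = (α ^ 2 - N * α) * ‖x‖ ^ (-α - 2) * x₁ := by
    rw [lap_eq_laplacian, hv', laplacian_norm_rpow_sub_mul_inner _ _ _ (norm_pos_iff.mp hx₀),
      finrank_euclideanSpace, Fintype.card_fin, EuclideanSpace.inner_single_left]
    simp only [map_one, one_mul, x₁]
    ring
  have hsplit : ‖x‖ ^ (-α) = ‖x‖ ^ (-α - 2) * ‖x‖ ^ 2 := by
    rw [← Real.rpow_natCast, ← Real.rpow_add hx₀]
    norm_num
  have hsq : ‖x‖ ^ 2 ≤ R ^ 2 := pow_le_pow_left₀ hx₀.le hxR.le 2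
  have hgap : 0 ≤ c₀ * (R ^ 2 - ‖x‖ ^ 2) := mul_nonneg hc₀ (by linarith)
  calc 0 ≤ c₀ * (R ^ 2 - ‖x‖ ^ 2) * ‖x‖ ^ (-α - 2) * x₁ + c₀ * R ^ (-α) * x₁ := by positivity
    _ = lap v x - c₀ * v x := by
      rw [hlap, hv x, hsplit]
      linear_combination -(‖x‖ ^ (-α - 2) * x₁) * hroot
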